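/- Let $\omega \in \mathbb{C}$ with $\mathrm{Im}\,\omega \neq 0$ and $k_1 \in [-\pi,\pi]$. Set $a = 4 - 2\cos k_1 - \omega^2$. Then the roots $z_\pm = (a \pm \sqrt{a^2-4})/2$ of $z^2 - a z + 1 = 0$ satisfy $z_+ z_- = 1$ and neither root lies on the unit circle; in particular one root lies strictly inside the unit disc and the other strictly outside. -/

import Mathlib

open Complex Real

theorem roots_off_unit_circle
    (ω : ℂ) (hω : ω.im ≠ 0) (k₁ : ℝ) (hk : k₁ ∈ Set.Icc (-π) π)
    (a : ℂ) (ha : a = 4 - 2 * (Real.cos k₁ : ℂ) - ω ^ 2)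
    (s : ℂ) (hs : s ^ 2 = a ^ 2 - 4) :
    ((a + s) / 2) * ((a - s) / 2) = 1 ∧
      ‖(a + s) / 2‖ ≠ 1 ∧ ‖(a - s) / 2‖ ≠ 1 ∧
      ((‖(a + s) / 2‖ < 1 ∧ 1 < ‖(a - s) / 2‖) ∨
        (‖(a - s) / 2‖ < 1 ∧ 1 < ‖(a + s) / 2‖)) := by
  have hprod : ((a + s) / 2) * ((a - s) / 2) = 1 := by
    field_simp
    linear_combination -hs
  -- a.im and a.re
  have haim : a.im = -(2 * ω.re * ω.im) := by
    rw [ha]; simp [Complex.sub_im, Complex.mul_im, pow_two]; ring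
  have hare : a.re = 4 - 2 * Real.cos k₁ - (ω.re ^ 2 - ω.im ^ 2) := by
    rw [ha]; simp only [Complex.sub_re, Complex.mul_re, Complex.ofReal_re, Complex.ofReal_im, pow_two]; norm_num
  have key : ∀ z : ℂ, z ^ 2 - a * z + 1 = 0 → ‖z‖ ≠ 1 := by
    intro z hz habs
    have hzz : z * (starRingEnd ℂ) z = 1 := by
      rw [Complex.mul_conj]
      norm_cast
      rw [Complex.normSq_eq_norm_sq, habs]; norm_num
    have hz0 : z ≠ 0 := by
      intro h; rw [h] at habs; simp at habs
    have haz : a = z + (starRingEnd ℂ) z := by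
      have h1 : z * a = z * (z + (starRingEnd ℂ) z) := by
        rw [mul_add, hzz]; linear_combination -hz
      exact mul_left_cancel₀ hz0 h1
    rw [Complex.add_conj] at haz
    have him : a.im = 0 := by rw [haz]; simp
    have hre : a.re = 2 * z.re := by rw [haz]; simp
    have hωre : ω.re = 0 := by
      by_contra h
      have : 2 * ω.re * ω.im ≠ 0 := by
        apply mul_ne_zero (mul_ne_zero (by norm_num) h) hω
      rw [haim] at him
      exact this (by linarith)
    have hcos : Real.cos k₁ ≤ 1 := Real.cos_le_one k₁
    have him2 : 0 < ω.im ^ 2 := by positivity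
    have hzre : z.re ≤ 1 := by
      calc z.re ≤ |z.re| := le_abs_self _
        _ ≤ ‖z‖ := Complex.abs_re_le_norm z
        _ = 1 := habs
    rw [hωre] at hare
    nlinarith [hare, hre, sq_nonneg ω.im, pow_pos (abs_pos.mpr hω) 2]
  have hroot1 : ((a + s) / 2) ^ 2 - a * ((a + s) / 2) + 1 = 0 := by
    linear_combination (1/4:ℂ) * hs
  have hroot2 : ((a - s) / 2) ^ 2 - a * ((a - s) / 2) + 1 = 0 := by
    linear_combination (1/4:ℂ) * hs
  have h1 := key _ hroot1
  have h2 := key _ hroot2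
  refine ⟨hprod, h1, h2, ?_⟩
  have habs : ‖(a + s) / 2‖ * ‖(a - s) / 2‖ = 1 := by
    rw [← norm_mul, hprod, norm_one]
  rcases lt_or_gt_of_ne h1 with h | h
  · left
    refine ⟨h, ?_⟩
    nlinarith [norm_nonneg ((a - s) / 2), norm_nonneg ((a + s) / 2)]
  · right
    refine ⟨?_, h⟩
    nlinarith [norm_nonneg ((a + s) / 2), norm_nonneg ((a - s) / 2)]
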